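/- Let G be a group with a finite symmetric generating set S, and let L be a set of words over S such that the evaluation map μ : L → G (sending a word to its product in G) is bijective. Suppose there are constants k, K > 0 such that: (i) any u, v ∈ L with d_S(μ(u), μ(v)) ≤ 1 satisfy the k-fellow traveler property; and (ii) |L(u) − L(v)| ≤ K whenever u, v ∈ L satisfy d_S(μ(u), μ(v)) = 1. Let R be the (finite) set of all words over S of length at most 2k+2 that represent the identity e. Then the normal closure of R in F_S equals the kernel of μ : F_S → G, and there exists a constant C > 0 (depending only on k, K and the length of the word of L representing e) such that every word w = s₁⋯sₙ over S representing e satisfies Area_R(w) ≤ C · Σ_{i=1}^n (d_S(w̄(i), e) + 1). -/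

import Mathlib

open scoped Pointwise

/-- The product in `G` of a word over the subset `S ⊆ G`. -/
def wordProd {G : Type*} [Group G] (S : Set G) (w : List S) : G :=
  (w.map (fun s => (s : G))).prod

/-- The word metric `d_S(a,b)`: the least `n` such that `b⁻¹ * a` is a product of
`n` elements of `S`. -/
noncomputable def wordDist {G : Type*} [Group G] (S : Set G) (a b : G) : ℕ :=
  sInf {n | ∃ w : List S, w.length = n ∧ wordProd S w = b⁻¹ * a}

/-- The evaluation homomorphism `μ : F_S → G` from the free group on `S`. -/
noncomputable def muEval {G : Type*} [Group G] (S : Set G) : FreeGroup S →* G :=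
  FreeGroup.lift (fun s => (s : G))

/-- A word over `S`, regarded as an element of the free group `F_S`. -/
def wordToFree {G : Type*} [Group G] (S : Set G) (w : List S) : FreeGroup S :=
  (w.map FreeGroup.of).prod

/-- The combinatorial area of a word `w` over `S` with respect to the relator set
`R ⊆ F_S`: the least `k` such that `w = ∏_{i=1}^k vᵢ rᵢ vᵢ⁻¹` in `F_S` with each
`rᵢ ∈ R` or `rᵢ⁻¹ ∈ R`. -/
noncomputable def area {G : Type*} [Group G] (S : Set G) (R : Set (FreeGroup S))
    (w : List S) : ℕ :=
  sInf {k | ∃ v r : Fin k → FreeGroup S,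
    (∀ i, r i ∈ R ∨ (r i)⁻¹ ∈ R) ∧
    wordToFree S w = (List.ofFn (fun i => v i * r i * (v i)⁻¹)).prod}

/-!
Fix the normal form `nf g ∈ L` of each `g`. A word `w` representing `e` is the product in `F_S`,
up to conjugation, of the cells `nf(w̄(i-1)) sᵢ nf(w̄(i))⁻¹`. The two normal forms in a cell
fellow travel, so rungs of length at most `k` joining their prefixes cut the cell into squares of
perimeter at most `2k+2`, each a bounded number of relators; a cell thus costs `O(ℓ)`, `ℓ` the
length of the longer normal form. Since normal form lengths change by at most `K` across an edge
of the Cayley graph, `ℓ ≤ |nf e| + K (d_S(w̄(i), e) + 1)`.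
-/

section Area

variable {F : Type*} [Group F]

def HasAreaLE (R : Set F) (x : F) (m : ℕ) : Prop :=
  ∃ l : List F, l.length ≤ m ∧ (∀ y ∈ l, y ∈ Group.conjugatesOfSet (R ∪ R⁻¹)) ∧
    l.prod = x

namespace HasAreaLE

variable {R : Set F} {x y : F} {m n : ℕ}

lemma one : HasAreaLE R 1 0 := ⟨[], le_rfl, by simp, rfl⟩

lemma of_mem_union_inv (hx : x ∈ R ∪ R⁻¹) : HasAreaLE R x 1 :=
  ⟨[x], le_rfl, by simpa using Group.subset_conjugatesOfSet hx, by simp⟩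

lemma of_mem (hx : x ∈ R) : HasAreaLE R x 1 := of_mem_union_inv (Or.inl hx)

lemma inv_of_mem (hx : x ∈ R) : HasAreaLE R x⁻¹ 1 :=
  of_mem_union_inv (Or.inr (by simpa using hx))

lemma mul (hx : HasAreaLE R x m) (hy : HasAreaLE R y n) : HasAreaLE R (x * y) (m + n) := by
  obtain ⟨l, hlm, hl, rfl⟩ := hx
  obtain ⟨l', hln, hl', rfl⟩ := hy
  refine ⟨l ++ l', by simp; omega, ?_, List.prod_append⟩
  simpa only [List.mem_append, or_imp, forall_and] using ⟨hl, hl'⟩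

lemma conj (g : F) (hx : HasAreaLE R x m) : HasAreaLE R (g * x * g⁻¹) m := by
  obtain ⟨l, hlm, hl, rfl⟩ := hx
  refine ⟨l.map (MulAut.conj g), by simpa using hlm, ?_,
    (map_list_prod (MulAut.conj g) l).symm⟩
  simpa using fun y hy => Group.conj_mem_conjugatesOfSet (hl y hy)

lemma mono (h : m ≤ n) (hx : HasAreaLE R x m) : HasAreaLE R x n := by
  obtain ⟨l, hlm, hl, rfl⟩ := hx
  exact ⟨l, hlm.trans h, hl, rfl⟩

lemma mem_normalClosure (hx : HasAreaLE R x m) : x ∈ Subgroup.normalClosure R := by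
  obtain ⟨l, -, hl, rfl⟩ := hx
  have hsub : R ∪ R⁻¹ ⊆ Subgroup.normalClosure R := by
    rintro r (hr | hr)
    · exact Subgroup.subset_normalClosure hr
    · simpa using inv_mem (Subgroup.subset_normalClosure (show r⁻¹ ∈ R from hr))
  exact list_prod_mem fun y hy => Group.conjugatesOfSet_subset hsub (hl y hy)

lemma telescope {D : ℕ → F} {c : ℕ → ℕ} :
    ∀ {n}, (∀ i < n, HasAreaLE R ((D i)⁻¹ * D (i + 1)) (c i)) →
      HasAreaLE R ((D 0)⁻¹ * D n) (∑ i ∈ Finset.range n, c i)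
  | 0, _ => by simpa using one
  | n + 1, h => by
    rw [Finset.sum_range_succ, show (D 0)⁻¹ * D (n + 1) =
      (D 0)⁻¹ * D n * ((D n)⁻¹ * D (n + 1)) by group]
    exact (telescope fun i hi => h i (by omega)).mul (h n (by omega))

end HasAreaLE

end Area

section WordGeometry

variable {G : Type*} [Group G] {S : Set G}

@[simp] lemma wordProd_nil : wordProd S [] = 1 := rfl

@[simp] lemma wordProd_cons (s : S) (w : List S) :
    wordProd S (s :: w) = s * wordProd S w := by
  simp [wordProd]

@[simp] lemma wordProd_append (u v : List S) :
    wordProd S (u ++ v) = wordProd S u * wordProd S v := by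
  simp [wordProd]

@[simp] lemma wordProd_singleton (s : S) : wordProd S [s] = s := by
  simp [wordProd]

@[simp] lemma wordToFree_nil : wordToFree S [] = 1 := rfl

@[simp] lemma wordToFree_append (u v : List S) :
    wordToFree S (u ++ v) = wordToFree S u * wordToFree S v := by
  simp [wordToFree]

@[simp] lemma wordToFree_singleton (s : S) : wordToFree S [s] = FreeGroup.of s := by
  simp [wordToFree]

lemma muEval_wordToFree (w : List S) : muEval S (wordToFree S w) = wordProd S w := by
  simp [wordToFree, wordProd, muEval, map_list_prod, Function.comp_def]

def invLetter (hS : S⁻¹ = S) (s : S) : S :=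
  ⟨(s : G)⁻¹, hS.subset (Set.inv_mem_inv.mpr s.2)⟩

def wordInv (hS : S⁻¹ = S) (w : List S) : List S :=
  (w.map (invLetter hS)).reverse

@[simp] lemma coe_invLetter (hS : S⁻¹ = S) (s : S) : (invLetter hS s : G) = (s : G)⁻¹ := rfl

@[simp] lemma length_wordInv (hS : S⁻¹ = S) (w : List S) : (wordInv hS w).length = w.length := by
  simp [wordInv]

@[simp] lemma wordProd_wordInv (hS : S⁻¹ = S) (w : List S) :
    wordProd S (wordInv hS w) = (wordProd S w)⁻¹ := by
  induction w with
  | nil => simp [wordInv]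
  | cons s w ih =>
    rw [wordInv, List.map_cons, List.reverse_cons, wordProd_append, ← wordInv, ih]
    simp

lemma exists_wordProd_eq (hS : S⁻¹ = S) (hgen : Subgroup.closure S = ⊤) (g : G) :
    ∃ w : List S, wordProd S w = g := by
  induction (hgen ▸ Subgroup.mem_top g : g ∈ Subgroup.closure S)
    using Subgroup.closure_induction'' with
  | mem x hx => exact ⟨[⟨x, hx⟩], by simp⟩
  | inv_mem x hx => exact ⟨[invLetter hS ⟨x, hx⟩], by simp⟩
  | one => exact ⟨[], rfl⟩
  | mul x y _ _ hx hy =>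
    obtain ⟨u, rfl⟩ := hx
    obtain ⟨v, rfl⟩ := hy
    exact ⟨u ++ v, wordProd_append u v⟩

lemma wordDist_le_length {a b : G} (w : List S) (hw : wordProd S w = b⁻¹ * a) :
    wordDist S a b ≤ w.length :=
  Nat.sInf_le ⟨w, rfl, hw⟩

lemma exists_length_eq_wordDist (hS : S⁻¹ = S) (hgen : Subgroup.closure S = ⊤) (a b : G) :
    ∃ w : List S, w.length = wordDist S a b ∧ wordProd S w = b⁻¹ * a := by
  obtain ⟨w, hw⟩ := exists_wordProd_eq hS hgen (b⁻¹ * a)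
  exact Nat.sInf_mem (s := {n | ∃ w : List S, w.length = n ∧ wordProd S w = b⁻¹ * a})
    ⟨w.length, w, rfl, hw⟩

lemma wordDist_mul_le_one (g : G) (s : S) : wordDist S (g * s) g ≤ 1 :=
  wordDist_le_length [s] (by simp)

lemma wordDist_mul_eq_one (g : G) {s : S} (hs : (s : G) ≠ 1) : wordDist S (g * s) g = 1 := by
  refine le_antisymm (wordDist_mul_le_one g s) (Nat.one_le_iff_ne_zero.mpr fun h0 => hs ?_)
  have hmem : wordDist S (g * s) g ∈
      {n | ∃ w : List S, w.length = n ∧ wordProd S w = g⁻¹ * (g * s)} :=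
    Nat.sInf_mem ⟨1, [s], rfl, by simp⟩
  obtain ⟨w, hlen, hw⟩ := hmem
  rw [h0, List.length_eq_zero_iff] at hlen
  simpa [hlen] using hw.symm

lemma le_add_mul_wordDist (hS : S⁻¹ = S) (hgen : Subgroup.closure S = ⊤)
    {f : G → ℕ} {K : ℕ} (hf : ∀ g (s : S), f (g * s) ≤ f g + K) (g : G) :
    f g ≤ f 1 + K * wordDist S g 1 := by
  have along : ∀ (z : List S) (h : G), f (h * wordProd S z) ≤ f h + K * z.length := by
    intro z
    induction z with
    | nil => simp
    | cons s z ih =>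
      intro h
      have hz := ih (h * s)
      have hs := hf h s
      rw [wordProd_cons, ← mul_assoc, List.length_cons, mul_add_one]
      omega
  obtain ⟨z, hz, hzg⟩ := exists_length_eq_wordDist hS hgen g 1
  simpa [hzg, hz] using along z 1

lemma area_le_of_hasAreaLE {R : Set (FreeGroup S)} {w : List S} {m : ℕ}
    (h : HasAreaLE R (wordToFree S w) m) : area S R w ≤ m := by
  obtain ⟨l, hlm, hl, hprod⟩ := h
  have hconj : ∀ i : Fin l.length,
      ∃ v r, (r ∈ R ∨ r⁻¹ ∈ R) ∧ v * r * v⁻¹ = l[i] := by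
    intro i
    obtain ⟨r, hr, hrl⟩ := Group.mem_conjugatesOfSet_iff.mp (hl _ (List.getElem_mem _))
    exact ⟨_, r, hr, (isConj_iff.mp hrl).choose_spec⟩
  choose v r hr hvr using hconj
  refine (Nat.sInf_le ?_).trans hlm
  exact ⟨v, r, hr, by simp [hvr, hprod]⟩

def shortRelators (S : Set G) (n : ℕ) : Set (FreeGroup S) :=
  {x | ∃ w : List S, w.length ≤ n ∧ wordProd S w = 1 ∧ wordToFree S w = x}

lemma hasAreaLE_of_wordProd_eq_one {n : ℕ} {w : List S} (hw : w.length ≤ n)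
    (h1 : wordProd S w = 1) : HasAreaLE (shortRelators S n) (wordToFree S w) 1 :=
  HasAreaLE.of_mem ⟨w, hw, h1, rfl⟩

-- `(of s)⁻¹` and `of (s⁻¹)` differ in `F_S`, so `(wordToFree S b)⁻¹` is traded for the positive
-- word `wordInv hS b` at the cost of the relator `b ++ wordInv hS b`.
lemma hasAreaLE_mul_inv_of_wordProd_eq (hS : S⁻¹ = S) {n : ℕ} {a b : List S}
    (ha : 2 * a.length ≤ n) (hb : 2 * b.length ≤ n) (hab : wordProd S a = wordProd S b) :
    HasAreaLE (shortRelators S n) (wordToFree S a * (wordToFree S b)⁻¹) 2 := by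
  have hab' := hasAreaLE_of_wordProd_eq_one (n := n) (w := a ++ wordInv hS b)
    (by simp; omega) (by simp [hab])
  have hbb : wordToFree S (b ++ wordInv hS b) ∈ shortRelators S n :=
    ⟨_, by simp; omega, by simp, rfl⟩
  convert hab'.mul (HasAreaLE.inv_of_mem hbb) using 1
  simp only [wordToFree_append]
  group

lemma normalClosure_shortRelators_le_ker (n : ℕ) :
    Subgroup.normalClosure (shortRelators S n) ≤ (muEval S).ker :=
  Subgroup.normalClosure_le_normal <| by
    rintro _ ⟨w, -, hw, rfl⟩
    simp [muEval_wordToFree, hw]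

lemma exists_word_inv_mul_mem_normalClosure (hS : S⁻¹ = S) {n : ℕ} (hn : 2 ≤ n)
    (y : FreeGroup S) :
    ∃ w : List S, wordProd S w = muEval S y ∧
      y⁻¹ * wordToFree S w ∈ Subgroup.normalClosure (shortRelators S n) := by
  induction y using FreeGroup.induction_on with
  | C1 => exact ⟨[], by simp, by simp⟩
  | of s => exact ⟨[s], by simp [muEval], by simp⟩
  | inv_of s _ =>
    refine ⟨[invLetter hS s], by simp [muEval], ?_⟩
    have hrel : wordToFree S [s, invLetter hS s] ∈ shortRelators S n :=
      ⟨_, by simpa using hn, by simp [wordProd], rfl⟩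
    simpa [wordToFree] using Subgroup.subset_normalClosure hrel
  | mul x y hx hy =>
    obtain ⟨u, hu, hxu⟩ := hx
    obtain ⟨v, hv, hyv⟩ := hy
    refine ⟨u ++ v, by simp [hu, hv], ?_⟩
    have hconj := Subgroup.normalClosure_normal.conj_mem _ hxu y⁻¹
    convert mul_mem hconj hyv using 1
    simp only [wordToFree_append]
    group

lemma normalClosure_shortRelators_eq_ker (hS : S⁻¹ = S) {n : ℕ} (hn : 2 ≤ n)
    (hfill : ∀ w : List S, wordProd S w = 1 →
      wordToFree S w ∈ Subgroup.normalClosure (shortRelators S n)) :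
    Subgroup.normalClosure (shortRelators S n) = (muEval S).ker := by
  refine le_antisymm (normalClosure_shortRelators_le_ker n) fun y hy => ?_
  obtain ⟨w, hw, hyw⟩ := exists_word_inv_mul_mem_normalClosure hS hn y
  rw [(MonoidHom.mem_ker).mp hy] at hw
  simpa using mul_mem (hfill w hw) (inv_mem hyw)

lemma hasAreaLE_ladder_rung (hS : S⁻¹ = S) {k j : ℕ} {u v c c' : List S}
    (hc : c.length ≤ k) (hc' : c'.length ≤ k)
    (hcj : wordProd S c = (wordProd S (u.take j))⁻¹ * wordProd S (v.take j))
    (hcj' : wordProd S c' = (wordProd S (u.take (j + 1)))⁻¹ * wordProd S (v.take (j + 1))) :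
    HasAreaLE (shortRelators S (2 * k + 2))
      ((wordToFree S c)⁻¹ * wordToFree S ((u.drop j).take 1) * wordToFree S c' *
        (wordToFree S ((v.drop j).take 1))⁻¹) 2 := by
  have ha : ((u.drop j).take 1).length ≤ 1 := List.length_take_le 1 _
  have hb : ((v.drop j).take 1).length ≤ 1 := List.length_take_le 1 _
  have hsquare := hasAreaLE_mul_inv_of_wordProd_eq hS (n := 2 * k + 2)
    (a := (u.drop j).take 1 ++ c') (b := c ++ (v.drop j).take 1)
    (by simp; omega) (by simp; omega)
    (by simp only [wordProd_append, hcj, hcj', List.take_add]; group)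
  convert hsquare.conj (wordToFree S c)⁻¹ using 1
  simp only [wordToFree_append]
  group

theorem hasAreaLE_of_fellowTravel (hS : S⁻¹ = S) (hgen : Subgroup.closure S = ⊤) {k : ℕ}
    {u v : List S} {s : S} (hs : wordProd S v = wordProd S u * s)
    (hft : ∀ j, wordDist S (wordProd S (v.take j)) (wordProd S (u.take j)) ≤ k) :
    HasAreaLE (shortRelators S (2 * k + 2))
      (wordToFree S u * FreeGroup.of s * (wordToFree S v)⁻¹)
      (2 * max u.length v.length + 3) := by
  choose c hc_len hc using fun j =>
    exists_length_eq_wordDist hS hgen (wordProd S (v.take j)) (wordProd S (u.take j))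
  replace hc_len : ∀ j, (c j).length ≤ k := fun j => (hc_len j).trans_le (hft j)
  set M := max u.length v.length
  -- `D j` runs along `u` to the rung `c j` and back along `v`; its successive quotients are the
  -- squares of the ladder.
  let D j := wordToFree S (u.take j) * wordToFree S (c j) * (wordToFree S (v.take j))⁻¹
  have hfirst : HasAreaLE (shortRelators S (2 * k + 2)) (D 0) 1 := by
    simpa [D] using hasAreaLE_of_wordProd_eq_one (n := 2 * k + 2)
      (by have := hc_len 0; omega) (by simpa using hc 0)
  have hrungs :
      HasAreaLE (shortRelators S (2 * k + 2)) ((D 0)⁻¹ * D M) (∑ _j ∈ Finset.range M, 2) :=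
    HasAreaLE.telescope fun j _ => by
      convert (hasAreaLE_ladder_rung hS (hc_len j) (hc_len (j + 1)) (hc j) (hc (j + 1))).conj
        (wordToFree S (v.take j)) using 1
      simp only [D, List.take_add, wordToFree_append]
      group
  have hlast :
      HasAreaLE (shortRelators S (2 * k + 2)) ((wordToFree S (c M))⁻¹ * FreeGroup.of s) 2 := by
    have hcM : wordProd S [s] = wordProd S (c M) := by
      simp [hc, M, List.take_of_length_le, hs]
    convert (hasAreaLE_mul_inv_of_wordProd_eq hS (n := 2 * k + 2) (by simp)
      (by have := hc_len M; omega) hcM).conj (wordToFree S (c M))⁻¹ using 1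
    simp only [wordToFree_singleton]
    group
  have hsplit : wordToFree S u * FreeGroup.of s * (wordToFree S v)⁻¹ =
      D 0 * ((D 0)⁻¹ * D M) * (wordToFree S v *
        ((wordToFree S (c M))⁻¹ * FreeGroup.of s) * (wordToFree S v)⁻¹) := by
    simp only [D, M, List.take_of_length_le (le_max_left _ _),
      List.take_of_length_le (le_max_right _ _)]
    group
  rw [hsplit]
  refine ((hfirst.mul hrungs).mul (hlast.conj _)).mono ?_
  simp only [Finset.sum_const, Finset.card_range, smul_eq_mul]
  omega

lemma hasAreaLE_wordToFree_of_cells {R : Set (FreeGroup S)} (w : List S) (p : ℕ → List S)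
    (hp : p w.length = p 0) (c : ℕ → ℕ)
    (hcell : ∀ i (hi : i < w.length), HasAreaLE R
      (wordToFree S (p i) * FreeGroup.of w[i] * (wordToFree S (p (i + 1)))⁻¹) (c i)) :
    HasAreaLE R (wordToFree S w) (∑ i ∈ Finset.range w.length, c i) := by
  let D i := wordToFree S (w.take i) * (wordToFree S (p i))⁻¹
  have h := HasAreaLE.telescope (D := D) fun i hi => by
    convert hcell i hi using 1
    simp only [D, List.take_succ_eq_append_getElem hi, wordToFree_append, wordToFree_singleton]
    group
  convert h.conj (wordToFree S (p 0))⁻¹ using 1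
  simp only [D, List.take_zero, List.take_length, hp, wordToFree_nil]
  group

lemma length_nf_mul_le {L : Set (List S)} {K : ℕ}
    (hlen : ∀ u ∈ L, ∀ v ∈ L, wordDist S (wordProd S u) (wordProd S v) = 1 →
      |(u.length : ℤ) - (v.length : ℤ)| ≤ K)
    {nf : G → List S} (hnfL : ∀ g, nf g ∈ L) (hnf : ∀ g, wordProd S (nf g) = g)
    (g : G) (s : S) :
    (nf (g * s)).length ≤ (nf g).length + K ∧ (nf g).length ≤ (nf (g * s)).length + K := by
  by_cases hs : (s : G) = 1
  · simp [hs]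
  · have := hlen _ (hnfL (g * s)) _ (hnfL g) (by rw [hnf, hnf]; exact wordDist_mul_eq_one g hs)
    rw [abs_le] at this
    omega

theorem hasAreaLE_wordToFree_of_normalForm (hS : S⁻¹ = S) (hgen : Subgroup.closure S = ⊤) {L : Set (List S)} {k K : ℕ}
    (hft : ∀ u ∈ L, ∀ v ∈ L, wordDist S (wordProd S u) (wordProd S v) ≤ 1 →
      ∀ i : ℕ, wordDist S (wordProd S (u.take i)) (wordProd S (v.take i)) ≤ k)
    (hlen : ∀ u ∈ L, ∀ v ∈ L, wordDist S (wordProd S u) (wordProd S v) = 1 →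
      |(u.length : ℤ) - (v.length : ℤ)| ≤ K)
    {nf : G → List S} (hnfL : ∀ g, nf g ∈ L) (hnf : ∀ g, wordProd S (nf g) = g)
    {w : List S} (hw : wordProd S w = 1) :
    HasAreaLE (shortRelators S (2 * k + 2)) (wordToFree S w)
      (∑ i ∈ Finset.range w.length,
        (2 * (nf 1).length + 2 * K + 3) * (wordDist S (wordProd S (w.take (i + 1))) 1 + 1)) := by
  have hprefix : ∀ i (hi : i < w.length),
      wordProd S (w.take (i + 1)) = wordProd S (w.take i) * w[i] := by
    intro i hi
    rw [List.take_succ_eq_append_getElem hi, wordProd_append, wordProd_singleton]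
  have hstep := length_nf_mul_le hlen hnfL hnf
  have hdist := le_add_mul_wordDist hS hgen (f := fun g => (nf g).length) fun g s => (hstep g s).1
  let p i := nf (wordProd S (w.take i))
  refine (hasAreaLE_wordToFree_of_cells w p (by simp [p, hw])
    (fun i => 2 * max (p i).length (p (i + 1)).length + 3) fun i hi => ?_).mono
    (Finset.sum_le_sum fun i hi => ?_)
  · simp only [p, hprefix i hi]
    refine hasAreaLE_of_fellowTravel hS hgen (by rw [hnf, hnf]) (hft _ (hnfL _) _ (hnfL _) ?_)
    rw [hnf, hnf]
    exact wordDist_mul_le_one _ _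
  · have hi : i < w.length := Finset.mem_range.mp hi
    have hnext := hdist (wordProd S (w.take (i + 1)))
    have hprev := (hstep (wordProd S (w.take i)) w[i]).2
    rw [← hprefix i hi] at hprev
    simp only [p]
    have hmax :
        max (nf (wordProd S (w.take i))).length (nf (wordProd S (w.take (i + 1)))).length ≤
        (nf 1).length + K * wordDist S (wordProd S (w.take (i + 1))) 1 + K :=
      max_le (by omega) (by omega)
    nlinarith

end WordGeometry

theorem bijective_automatic_structure_quadratic_radial_isoperimetric_general
    {G : Type*} [Group G] (S : Set G)
    (hSsymm : S⁻¹ = S) (hSgen : Subgroup.closure S = ⊤)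
    (L : Set (List S))
    -- the evaluation map `μ : L → G` is bijective
    (hbij : ∀ g : G, ∃! w, w ∈ L ∧ wordProd S w = g)
    (k K : ℕ)
    -- (i) the `k`-fellow traveler property
    (hft : ∀ u ∈ L, ∀ v ∈ L,
      wordDist S (wordProd S u) (wordProd S v) ≤ 1 →
      ∀ i : ℕ, wordDist S (wordProd S (u.take i)) (wordProd S (v.take i)) ≤ k)
    -- (ii) lengths of words at distance one differ by at most `K`
    (hlen : ∀ u ∈ L, ∀ v ∈ L,
      wordDist S (wordProd S u) (wordProd S v) = 1 →
      |(u.length : ℤ) - (v.length : ℤ)| ≤ K)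
    -- `R` is the set of all words over `S` of length at most `2k+2` representing `e`
    (R : Set (FreeGroup S))
    (hR : R = {x : FreeGroup S | ∃ w : List S,
      w.length ≤ 2 * k + 2 ∧ wordProd S w = 1 ∧ wordToFree S w = x}) :
    Subgroup.normalClosure R = (muEval S).ker ∧
    ∃ C : ℝ, 0 < C ∧ ∀ w : List S, wordProd S w = 1 →
      (area S R w : ℝ) ≤ C * ∑ i ∈ Finset.range w.length,
        ((wordDist S (wordProd S (w.take (i + 1))) 1 : ℝ) + 1) := by
  choose nf hnfL hnf using fun g => (hbij g).exists
  have hfill := fun w (hw : wordProd S w = 1) =>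
    hasAreaLE_wordToFree_of_normalForm hSsymm hSgen hft hlen hnfL hnf hw
  obtain rfl : R = shortRelators S (2 * k + 2) := hR
  refine ⟨normalClosure_shortRelators_eq_ker hSsymm (by omega)
    fun w hw => (hfill w hw).mem_normalClosure, 2 * (nf 1).length + 2 * K + 3, by positivity,
    fun w hw => ?_⟩
  rw [Finset.mul_sum]
  exact_mod_cast area_le_of_hasAreaLE (hfill w hw)

/-- If `μ : L → G` is bijective, `L` has the `k`-fellow-traveler
property and lengths of `L`-words at `d_S`-distance one differ by at most `K`, then
with `R` the set of words of length at most `2k+2` representing the identity, the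
normal closure of `R` is the kernel of `μ : F_S → G` and the quadratic radial
isoperimetric inequality holds. -/
theorem bijective_automatic_structure_quadratic_radial_isoperimetric
    {G : Type*} [Group G] (S : Set G)
    (hSfin : S.Finite) (hSsymm : S⁻¹ = S) (hSgen : Subgroup.closure S = ⊤)
    (L : Set (List S))
    -- the evaluation map `μ : L → G` is bijective
    (hbij : ∀ g : G, ∃! w, w ∈ L ∧ wordProd S w = g)
    (k K : ℕ) (hk : 0 < k) (hK : 0 < K)
    -- (i) the `k`-fellow traveler property
    (hft : ∀ u ∈ L, ∀ v ∈ L,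
      wordDist S (wordProd S u) (wordProd S v) ≤ 1 →
      ∀ i : ℕ, wordDist S (wordProd S (u.take i)) (wordProd S (v.take i)) ≤ k)
    -- (ii) lengths of words at distance one differ by at most `K`
    (hlen : ∀ u ∈ L, ∀ v ∈ L,
      wordDist S (wordProd S u) (wordProd S v) = 1 →
      |(u.length : ℤ) - (v.length : ℤ)| ≤ K)
    -- `R` is the set of all words over `S` of length at most `2k+2` representing `e`
    (R : Set (FreeGroup S))
    (hR : R = {x : FreeGroup S | ∃ w : List S,
      w.length ≤ 2 * k + 2 ∧ wordProd S w = 1 ∧ wordToFree S w = x}) :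
    Subgroup.normalClosure R = (muEval S).ker ∧
    ∃ C : ℝ, 0 < C ∧ ∀ w : List S, wordProd S w = 1 →
      (area S R w : ℝ) ≤ C * ∑ i ∈ Finset.range w.length,
        ((wordDist S (wordProd S (w.take (i + 1))) 1 : ℝ) + 1) :=
  bijective_automatic_structure_quadratic_radial_isoperimetric_general S hSsymm hSgen L hbij k K hft
    hlen R hR
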